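/- In any run of the continued fraction algorithm of length N ∈ ℕ ∪ {∞} on input z ∈ ℂ and any 1 ≤ n ≤ N: (i) |q_n·(q_n·z − p_n)| < μ/((1 − ε²)·|z_n|); and if moreover n + 1 ≤ N, then (ii) |q_n·(q_n·z − p_n)| < (1 + ε²)·μ²/((1 − ε²)·|a_{n+1}|) and (iii) |q_n·(q_n·z − p_n)| < μ·|q_n|/((1 − ε²)·|q_{n+1}|). -/

import Mathlib

/-!
With `Zₙ = z₁ ⋯ zₙ`, every solution `x` of the three-term recurrence of `p` and `q` satisfies
`xₙ zₙ + xₙ₋₁ = bₙ Zₙ (x₀ z + x₋₁)`. Applied to `qₙ z - pₙ` this gives `(qₙ z - pₙ) Zₙ = ±1`, so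
`|qₙ (qₙ z - pₙ)| = |qₙ| / |Zₙ|`; applied to `qₙ`, together with `|zₖ| ≥ 1/ε`, it gives by induction
`|qₙ₊₁| < μ |Zₙ| / (1 - ε²)`. This yields (i) and (iii), and (ii) follows from (i) because
`|aₙ₊₁| ≤ (1 + ε²) μ |zₙ|`.

The arithmetic of `𝒪` enters only to show that the denominators do not vanish. `qₙ ≠ 0`
because `|pₙ| ≥ 1` for `0 ≠ pₙ ∈ 𝒪` while `|Zₙ| > 1`. `aₙ₊₁ ≠ 0` because otherwise
`(pₙ₊₁, qₙ₊₁) = (bₙ₊₁ / bₙ) (pₙ₋₁, qₙ₋₁)` with `|bₙ₊₁| < |bₙ|`; since `[𝒪 : x 𝔞] = |x|² [𝒪 : 𝔞]`,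
this ideal would have smaller norm than the reduced ideal `(pₙ₋₁, qₙ₋₁)` in its class.
-/

noncomputable section

namespace CFNE

/-- τ = (Δ + i·√|Δ|)/2. -/
def tau (Δ : ℤ) : ℂ := ((Δ : ℂ) + Complex.I * (Real.sqrt |(Δ : ℝ)|)) / 2

/-- The imaginary quadratic order 𝒪 = ℤ[τ] of discriminant Δ, as a subring of ℂ. -/
def O (Δ : ℤ) : Subring ℂ := Subring.closure {tau Δ}

/-- A (nonzero or zero) ideal of 𝒪, presented as a subset of ℂ. -/
structure IdealS (Δ : ℤ) where
  carrier : Set ℂ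
  subset : carrier ⊆ (O Δ : Set ℂ)
  zero_mem : (0 : ℂ) ∈ carrier
  add_mem : ∀ x ∈ carrier, ∀ y ∈ carrier, x + y ∈ carrier
  neg_mem : ∀ x ∈ carrier, -x ∈ carrier
  smul_mem : ∀ r ∈ (O Δ : Set ℂ), ∀ x ∈ carrier, r * x ∈ carrier

/-- The ideal as an additive subgroup of ℂ. -/
def IdealS.toAddSubgroup {Δ : ℤ} (I : IdealS Δ) : AddSubgroup ℂ where
  carrier := I.carrier
  zero_mem' := I.zero_mem
  add_mem' := fun hx hy => I.add_mem _ hx _ hy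
  neg_mem' := fun hx => I.neg_mem _ hx

/-- The norm of an ideal: the index [𝒪 : 𝔟]. -/
def IdealS.norm {Δ : ℤ} (I : IdealS Δ) : ℕ :=
  I.toAddSubgroup.relIndex (O Δ).toAddSubgroup

/-- The ideal is nonzero. -/
def IdealS.Nonzero {Δ : ℤ} (I : IdealS Δ) : Prop := ∃ x ∈ I.carrier, x ≠ 0

/-- Two nonzero ideals lie in the same class if x·𝔞 = y·𝔟 for some nonzero x, y ∈ 𝒪. -/
def SameClass {Δ : ℤ} (I J : IdealS Δ) : Prop :=
  ∃ x ∈ (O Δ : Set ℂ), ∃ y ∈ (O Δ : Set ℂ), x ≠ 0 ∧ y ≠ 0 ∧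
    (fun t => x * t) '' I.carrier = (fun t => y * t) '' J.carrier

/-- A reduced ideal: a nonzero ideal of minimal norm in its ideal class. -/
def IsReduced {Δ : ℤ} (I : IdealS Δ) : Prop :=
  I.Nonzero ∧ ∀ J : IdealS Δ, J.Nonzero → SameClass I J → I.norm ≤ J.norm

/-- The inverse fractional ideal 𝔟⁻¹ = {x ∈ ℂ : x·𝔟 ⊆ 𝒪}. -/
def invSet {Δ : ℤ} (I : IdealS Δ) : Set ℂ :=
  {x : ℂ | ∀ y ∈ I.carrier, x * y ∈ (O Δ : Set ℂ)}

/-- The fractional ideal a·𝔟 + b·𝔟⁻¹, as a subset of ℂ. -/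
def combSet {Δ : ℤ} (I : IdealS Δ) (a b : ℂ) : Set ℂ :=
  {u : ℂ | ∃ s ∈ I.carrier, ∃ t ∈ invSet I, u = a * s + b * t}

/-- The ideal x·𝒪 + y·𝒪 of 𝒪 generated by x and y, as a subset of ℂ. -/
def genSet (Δ : ℤ) (x y : ℂ) : Set ℂ :=
  {u : ℂ | ∃ s ∈ (O Δ : Set ℂ), ∃ t ∈ (O Δ : Set ℂ), u = x * s + y * t}

/-- The set is the carrier of a reduced ideal of 𝒪. -/
def IsReducedSet (Δ : ℤ) (S : Set ℂ) : Prop :=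
  ∃ J : IdealS Δ, IsReduced J ∧ J.carrier = S

/-- B is admissible with ε ∈ (0,1): B is a nonempty finite subset of 𝒪 ∖ {0}, and for every
reduced ideal 𝔟 with 𝔟 ∩ B ≠ ∅, the discs D(a/b, ε/|b|) over b ∈ 𝔟 ∩ B, a ∈ 𝔟⁻¹ with
a·𝔟 + b·𝔟⁻¹ reduced, cover ℂ. -/
def Admissible (Δ : ℤ) (B : Set ℂ) (ε : ℝ) : Prop :=
  B.Nonempty ∧ B.Finite ∧ B ⊆ (O Δ : Set ℂ) ∧ (0 : ℂ) ∉ B ∧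
  ∀ I : IdealS Δ, IsReduced I → (I.carrier ∩ B).Nonempty →
    ∀ z : ℂ, ∃ b ∈ I.carrier ∩ B, ∃ a ∈ invSet I,
      IsReducedSet Δ (combSet I a b) ∧ ‖z - a / b‖ ≤ ε / ‖b‖

/-- μ = max{|b| : b ∈ B}. -/
def mu (B : Set ℂ) : ℝ := sSup ((fun w : ℂ => ‖w‖) '' B)

/-- A run of the continued fraction algorithm of length N ∈ ℕ ∪ {∞} on input z. -/
structure Run (Δ : ℤ) (B : Set ℂ) (ε : ℝ) (z : ℂ) (N : ℕ∞) where
  a : ℤ → ℂ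
  b : ℤ → ℂ
  p : ℤ → ℂ
  q : ℤ → ℂ
  zs : ℤ → ℂ
  b_zero : b 0 = 1
  p_neg_one : p (-1) = 0
  q_neg_one : q (-1) = 1
  p_zero : p 0 = 1
  q_zero : q 0 = 0
  zs_zero : zs 0 = z
  ha : ∀ n : ℕ, 1 ≤ n → (n : ℕ∞) ≤ N → a n ∈ O Δ
  hb : ∀ n : ℕ, 1 ≤ n → (n : ℕ∞) ≤ N → b n ∈ B
  hne : ∀ n : ℕ, 1 ≤ n → (n : ℕ∞) ≤ N → b n * zs ((n : ℤ) - 1) - a n ≠ 0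
  hclose : ∀ n : ℕ, 1 ≤ n → (n : ℕ∞) ≤ N →
    ‖b n * zs ((n : ℤ) - 1) - a n‖ ≤ ε * ‖b ((n : ℤ) - 1)‖
  hp : ∀ n : ℕ, 1 ≤ n → (n : ℕ∞) ≤ N →
    p n = (a n * p ((n : ℤ) - 1) + b n * p ((n : ℤ) - 2)) / b ((n : ℤ) - 1)
  hq : ∀ n : ℕ, 1 ≤ n → (n : ℕ∞) ≤ N →
    q n = (a n * q ((n : ℤ) - 1) + b n * q ((n : ℤ) - 2)) / b ((n : ℤ) - 1)
  hz : ∀ n : ℕ, 1 ≤ n → (n : ℕ∞) ≤ N →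
    zs n = b ((n : ℤ) - 1) / (b n * zs ((n : ℤ) - 1) - a n)
  hpO : ∀ n : ℕ, 1 ≤ n → (n : ℕ∞) ≤ N → p n ∈ O Δ
  hqO : ∀ n : ℕ, 1 ≤ n → (n : ℕ∞) ≤ N → q n ∈ O Δ
  hred : ∀ n : ℕ, 1 ≤ n → (n : ℕ∞) ≤ N → IsReducedSet Δ (genSet Δ (p n) (q n))

open scoped Pointwise

section QuadraticOrder

variable {Δ : ℤ}

/-- The norm `τ τ̄ = (Δ² - Δ) / 4` of `τ`; the division is exact when `Δ ≡ 0, 1 (mod 4)`. -/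
def tauNorm (Δ : ℤ) : ℤ := (Δ ^ 2 - Δ) / 4

lemma conj_tau (Δ : ℤ) : starRingEnd ℂ (tau Δ) = Δ - tau Δ := by
  rw [tau, map_div₀, map_add, map_mul, Complex.conj_I, Complex.conj_ofReal, map_intCast,
    map_ofNat]
  ring

lemma tau_mul_conj_tau (hΔneg : Δ < 0) (hΔmod : Δ % 4 = 0 ∨ Δ % 4 = 1) :
    tau Δ * starRingEnd ℂ (tau Δ) = tauNorm Δ := by
  have hdvd : (4 : ℤ) ∣ Δ ^ 2 - Δ := by
    rw [show Δ ^ 2 - Δ = Δ * (Δ - 1) by ring]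
    rcases hΔmod with h | h
    · exact (Int.dvd_of_emod_eq_zero h).mul_right _
    · exact (Int.dvd_self_sub_of_emod_eq h).mul_left _
  have h4 : (tauNorm Δ : ℂ) * 4 = Δ ^ 2 - Δ := by exact_mod_cast Int.ediv_mul_cancel hdvd
  have hsqrt : ((Real.sqrt |(Δ : ℝ)| : ℝ) : ℂ) ^ 2 = -Δ := by
    rw [← Complex.ofReal_pow, Real.sq_sqrt (abs_nonneg _),
      abs_of_neg (by exact_mod_cast hΔneg : (Δ : ℝ) < 0)]
    push_cast; ring
  rw [conj_tau, tau]
  linear_combination (-1 / 4 : ℂ) * h4 + (1 / 4 : ℂ) * hsqrt -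
    (((Real.sqrt |(Δ : ℝ)| : ℝ) : ℂ) ^ 2 / 4) * Complex.I_sq

lemma mem_O_iff (hΔneg : Δ < 0) (hΔmod : Δ % 4 = 0 ∨ Δ % 4 = 1) {x : ℂ} :
    x ∈ O Δ ↔ ∃ m k : ℤ, x = m + k * tau Δ := by
  refine ⟨fun hx => ?_, ?_⟩
  · have htau := tau_mul_conj_tau hΔneg hΔmod
    rw [conj_tau] at htau
    let S : Subring ℂ :=
      { carrier := {u | ∃ m k : ℤ, u = m + k * tau Δ}
        one_mem' := ⟨1, 0, by push_cast; ring⟩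
        zero_mem' := ⟨0, 0, by push_cast; ring⟩
        add_mem' := by
          rintro _ _ ⟨m, k, rfl⟩ ⟨m', k', rfl⟩
          exact ⟨m + m', k + k', by push_cast; ring⟩
        neg_mem' := by
          rintro _ ⟨m, k, rfl⟩
          exact ⟨-m, -k, by push_cast; ring⟩
        mul_mem' := by
          rintro _ _ ⟨m, k, rfl⟩ ⟨m', k', rfl⟩
          refine ⟨m * m' - k * k' * tauNorm Δ, m * k' + k * m' + k * k' * Δ, ?_⟩
          push_cast
          linear_combination (-(k : ℂ) * k') * htau }
    have htauS : tau Δ ∈ S := ⟨0, 1, by push_cast; ring⟩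
    exact Subring.closure_le.mpr (Set.singleton_subset_iff.mpr htauS) hx
  · rintro ⟨m, k, rfl⟩
    exact add_mem (intCast_mem _ m) (mul_mem (intCast_mem _ k) (Subring.subset_closure rfl))

lemma conj_mem_O (hΔneg : Δ < 0) (hΔmod : Δ % 4 = 0 ∨ Δ % 4 = 1) {x : ℂ} (hx : x ∈ O Δ) :
    starRingEnd ℂ x ∈ O Δ := by
  obtain ⟨m, k, rfl⟩ := (mem_O_iff hΔneg hΔmod).mp hx
  refine (mem_O_iff hΔneg hΔmod).mpr ⟨m + k * Δ, -k, ?_⟩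
  simp only [map_add, map_mul, map_intCast, conj_tau]
  push_cast; ring

lemma exists_mul_conj_eq_natCast (hΔneg : Δ < 0) (hΔmod : Δ % 4 = 0 ∨ Δ % 4 = 1) {x : ℂ}
    (hx : x ∈ O Δ) : ∃ n : ℕ, x * starRingEnd ℂ x = n := by
  obtain ⟨m, k, rfl⟩ := (mem_O_iff hΔneg hΔmod).mp hx
  have hint : (m + k * tau Δ) * starRingEnd ℂ (m + k * tau Δ) =
      ((m ^ 2 + Δ * m * k + tauNorm Δ * k ^ 2 : ℤ) : ℂ) := by
    have htau := tau_mul_conj_tau hΔneg hΔmod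
    simp only [map_add, map_mul, map_intCast] at htau ⊢
    rw [conj_tau] at htau ⊢
    push_cast
    linear_combination (k : ℂ) ^ 2 * htau
  have hnonneg : 0 ≤ m ^ 2 + Δ * m * k + tauNorm Δ * k ^ 2 := by
    rw [Complex.mul_conj] at hint
    have h : Complex.normSq (m + k * tau Δ) = (m ^ 2 + Δ * m * k + tauNorm Δ * k ^ 2 : ℤ) := by
      exact_mod_cast hint
    exact_mod_cast h ▸ Complex.normSq_nonneg _
  lift m ^ 2 + Δ * m * k + tauNorm Δ * k ^ 2 to ℕ using hnonneg with n
  exact ⟨n, by exact_mod_cast hint⟩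

lemma one_le_norm_of_mem_O (hΔneg : Δ < 0) (hΔmod : Δ % 4 = 0 ∨ Δ % 4 = 1) {x : ℂ}
    (hx : x ∈ O Δ) (h0 : x ≠ 0) : 1 ≤ ‖x‖ := by
  obtain ⟨n, hn⟩ := exists_mul_conj_eq_natCast hΔneg hΔmod hx
  rw [Complex.mul_conj, Complex.normSq_eq_norm_sq] at hn
  have hsq : ‖x‖ ^ 2 = n := by exact_mod_cast hn
  have hn0 : n ≠ 0 := by rintro rfl; exact h0 (by simpa using hsq)
  rw [← one_le_sq_iff₀ (norm_nonneg x), hsq]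
  exact_mod_cast Nat.one_le_iff_ne_zero.mpr hn0

end QuadraticOrder

section Index

variable {Δ : ℤ}

lemma relIndex_smul_smul {x : ℂ} (hx : x ≠ 0) (H K : AddSubgroup ℂ) :
    (x • H).relIndex (x • K) = H.relIndex K :=
  AddSubgroup.relIndex_map_map_of_injective H K (mul_right_injective₀ hx)

lemma smul_le_O {x : ℂ} (hx : x ∈ O Δ) {H : AddSubgroup ℂ} (hH : H ≤ (O Δ).toAddSubgroup) :
    x • H ≤ (O Δ).toAddSubgroup := by
  rintro _ ⟨v, hv, rfl⟩
  exact (O Δ).mul_mem hx (hH hv)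

def coordHom (Δ : ℤ) : ℤ × ℤ →+ ℂ :=
  AddMonoidHom.mk' (fun p => p.1 + p.2 * tau Δ) (fun a b => by
    simp only [Prod.fst_add, Prod.snd_add]; push_cast; ring)

lemma coordHom_injective (hΔneg : Δ < 0) : Function.Injective (coordHom Δ) := by
  have him : 0 < (tau Δ).im := by
    have : 0 < Real.sqrt |(Δ : ℝ)| := Real.sqrt_pos.mpr (abs_pos.mpr (by exact_mod_cast hΔneg.ne))
    simpa [tau] using this
  rintro ⟨m, k⟩ ⟨m', k'⟩ h
  simp only [coordHom, AddMonoidHom.mk'_apply, Complex.ext_iff, Complex.add_re,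
    Complex.add_im, Complex.mul_re, Complex.mul_im, Complex.intCast_re,
    Complex.intCast_im, zero_mul, sub_zero, add_zero, zero_add] at h
  have hk : (k : ℝ) = k' := mul_right_cancel₀ him.ne' (by linarith [h.2])
  have hm : (m : ℝ) = m' := by rw [hk] at h; linarith [h.1]
  exact Prod.ext (by exact_mod_cast hm) (by exact_mod_cast hk)

lemma map_coordHom_prod_zmultiples (hΔneg : Δ < 0) (hΔmod : Δ % 4 = 0 ∨ Δ % 4 = 1) (a : ℤ) :
    ((AddSubgroup.zmultiples a).prod (AddSubgroup.zmultiples a)).map (coordHom Δ) =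
      (a : ℂ) • (O Δ).toAddSubgroup := by
  ext u
  simp only [AddSubgroup.mem_map, AddSubgroup.mem_prod, AddSubgroup.mem_zmultiples_iff,
    AddSubgroup.mem_smul_pointwise_iff_exists, Subring.mem_toAddSubgroup, mem_O_iff hΔneg hΔmod,
    coordHom, AddMonoidHom.mk'_apply, Prod.exists, smul_eq_mul]
  constructor
  · rintro ⟨_, _, ⟨⟨m, rfl⟩, ⟨k, rfl⟩⟩, rfl⟩
    exact ⟨_, ⟨m, k, rfl⟩, by push_cast; ring⟩
  · rintro ⟨_, ⟨m, k, rfl⟩, rfl⟩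
    exact ⟨_, _, ⟨⟨m, rfl⟩, ⟨k, rfl⟩⟩, by push_cast; ring⟩

lemma relIndex_natCast_smul_O (hΔneg : Δ < 0) (hΔmod : Δ % 4 = 0 ∨ Δ % 4 = 1) (n : ℕ) :
    ((n : ℂ) • (O Δ).toAddSubgroup).relIndex (O Δ).toAddSubgroup = n * n := by
  have hO : (⊤ : AddSubgroup (ℤ × ℤ)).map (coordHom Δ) = (O Δ).toAddSubgroup := by
    simpa using map_coordHom_prod_zmultiples hΔneg hΔmod 1
  rw [show (n : ℂ) = ((n : ℤ) : ℂ) by simp, ← map_coordHom_prod_zmultiples hΔneg hΔmod, ← hO,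
    AddSubgroup.relIndex_map_map_of_injective _ _ (coordHom_injective hΔneg),
    AddSubgroup.relIndex_top_right, AddSubgroup.index_prod, Int.index_zmultiples,
    Int.natAbs_natCast]

lemma relIndex_conj_smul_O (hΔneg : Δ < 0) (hΔmod : Δ % 4 = 0 ∨ Δ % 4 = 1) (x : ℂ) :
    (starRingEnd ℂ x • (O Δ).toAddSubgroup).relIndex (O Δ).toAddSubgroup =
      (x • (O Δ).toAddSubgroup).relIndex (O Δ).toAddSubgroup := by
  let c : ℂ →+ ℂ := (starRingEnd ℂ).toAddMonoidHom
  have hO : (O Δ).toAddSubgroup.map c = (O Δ).toAddSubgroup := by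
    refine le_antisymm ?_ fun u hu => ⟨starRingEnd ℂ u, conj_mem_O hΔneg hΔmod hu, by simp [c]⟩
    rintro _ ⟨v, hv, rfl⟩
    exact conj_mem_O hΔneg hΔmod hv
  have hsmul : (x • (O Δ).toAddSubgroup).map c = starRingEnd ℂ x • (O Δ).toAddSubgroup := by
    ext u
    simp only [AddSubgroup.mem_map, AddSubgroup.mem_smul_pointwise_iff_exists,
      Subring.mem_toAddSubgroup, smul_eq_mul]
    constructor
    · rintro ⟨_, ⟨v, hv, rfl⟩, rfl⟩
      exact ⟨starRingEnd ℂ v, conj_mem_O hΔneg hΔmod hv, by simp [c]⟩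
    · rintro ⟨v, hv, rfl⟩
      exact ⟨x * starRingEnd ℂ v, ⟨_, conj_mem_O hΔneg hΔmod hv, rfl⟩, by simp [c]⟩
  have hc : Function.Injective c := (starRingEnd ℂ).injective
  calc _ = ((x • (O Δ).toAddSubgroup).map c).relIndex ((O Δ).toAddSubgroup.map c) := by
        rw [hsmul, hO]
    _ = _ := AddSubgroup.relIndex_map_map_of_injective _ _ hc

/-- With `n = x x̄`: `x 𝒪 ⊇ n 𝒪` and `[x 𝒪 : n 𝒪] = [𝒪 : x̄ 𝒪] = [𝒪 : x 𝒪]` (conjugation preserves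
`𝒪`), so `[𝒪 : x 𝒪]² = [𝒪 : n 𝒪] = n²`. -/
lemma relIndex_smul_O (hΔneg : Δ < 0) (hΔmod : Δ % 4 = 0 ∨ Δ % 4 = 1) {x : ℂ}
    (hx : x ∈ O Δ) (h0 : x ≠ 0) :
    ((x • (O Δ).toAddSubgroup).relIndex (O Δ).toAddSubgroup : ℝ) = Complex.normSq x := by
  obtain ⟨n, hn⟩ := exists_mul_conj_eq_natCast hΔneg hΔmod hx
  have hxO := smul_le_O hx le_rfl
  have hnx : (n : ℂ) • (O Δ).toAddSubgroup ≤ x • (O Δ).toAddSubgroup := by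
    rw [← hn, mul_smul]
    exact AddSubgroup.map_mono (smul_le_O (conj_mem_O hΔneg hΔmod hx) le_rfl)
  have hsq := AddSubgroup.relIndex_mul_relIndex _ _ _ hnx hxO
  rw [← hn, mul_smul, relIndex_smul_smul h0, relIndex_conj_smul_O hΔneg hΔmod, ← mul_smul, hn,
    relIndex_natCast_smul_O hΔneg hΔmod, Nat.mul_self_inj] at hsq
  rw [hsq, ← Complex.ofReal_inj, ← Complex.mul_conj, hn]
  simp

lemma relIndex_smul_eq_normSq_mul (hΔneg : Δ < 0) (hΔmod : Δ % 4 = 0 ∨ Δ % 4 = 1) {x : ℂ}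
    (hx : x ∈ O Δ) (h0 : x ≠ 0) {H : AddSubgroup ℂ} (hH : H ≤ (O Δ).toAddSubgroup) :
    ((x • H).relIndex (O Δ).toAddSubgroup : ℝ) =
      Complex.normSq x * H.relIndex (O Δ).toAddSubgroup := by
  have hle : x • H ≤ x • (O Δ).toAddSubgroup := AddSubgroup.map_mono hH
  rw [← AddSubgroup.relIndex_mul_relIndex _ _ _ hle (smul_le_O hx le_rfl),
    relIndex_smul_smul h0, Nat.cast_mul, relIndex_smul_O hΔneg hΔmod hx h0, mul_comm]

end Index

section ReducedIdeals

variable {Δ : ℤ}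

lemma IdealS.norm_ne_zero (hΔneg : Δ < 0) (hΔmod : Δ % 4 = 0 ∨ Δ % 4 = 1) {I : IdealS Δ}
    (hI : I.Nonzero) : I.norm ≠ 0 := by
  obtain ⟨w, hw, hw0⟩ := hI
  have hwI : w • (O Δ).toAddSubgroup ≤ I.toAddSubgroup := by
    rintro _ ⟨v, hv, rfl⟩
    show w * v ∈ I.carrier
    exact mul_comm v w ▸ I.smul_mem v hv w hw
  intro h0
  have h := relIndex_smul_O hΔneg hΔmod (I.subset hw) hw0
  rw [AddSubgroup.relIndex_eq_zero_of_le_left hwI h0, Nat.cast_zero, eq_comm,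
    Complex.normSq_eq_zero] at h
  exact hw0 h

lemma normSq_mul_norm_eq_of_image_eq (hΔneg : Δ < 0) (hΔmod : Δ % 4 = 0 ∨ Δ % 4 = 1)
    {I J : IdealS Δ} {x y : ℂ} (hx : x ∈ O Δ) (hy : y ∈ O Δ) (hx0 : x ≠ 0) (hy0 : y ≠ 0)
    (h : (fun t => x * t) '' I.carrier = (fun t => y * t) '' J.carrier) :
    Complex.normSq x * I.norm = Complex.normSq y * J.norm := by
  have hsmul : x • I.toAddSubgroup = y • J.toAddSubgroup := SetLike.coe_injective h
  rw [IdealS.norm, IdealS.norm, ← relIndex_smul_eq_normSq_mul hΔneg hΔmod hx hx0 I.subset,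
    ← relIndex_smul_eq_normSq_mul hΔneg hΔmod hy hy0 J.subset, hsmul]

lemma IsReduced.normSq_le_of_image_eq (hΔneg : Δ < 0) (hΔmod : Δ % 4 = 0 ∨ Δ % 4 = 1)
    {I J : IdealS Δ} (hI : IsReduced I) (hJ : J.Nonzero) {x y : ℂ} (hx : x ∈ O Δ)
    (hy : y ∈ O Δ) (hx0 : x ≠ 0) (hy0 : y ≠ 0)
    (h : (fun t => x * t) '' I.carrier = (fun t => y * t) '' J.carrier) :
    Complex.normSq y ≤ Complex.normSq x := by
  have hle : (I.norm : ℝ) ≤ J.norm := by exact_mod_cast hI.2 J hJ ⟨x, hx, y, hy, hx0, hy0, h⟩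
  have hpos : (0 : ℝ) < I.norm := by
    exact_mod_cast Nat.pos_of_ne_zero (I.norm_ne_zero hΔneg hΔmod hI.1)
  have heq := normSq_mul_norm_eq_of_image_eq hΔneg hΔmod hx hy hx0 hy0 h
  refine le_of_mul_le_mul_right ?_ hpos
  calc Complex.normSq y * I.norm ≤ Complex.normSq y * J.norm :=
        mul_le_mul_of_nonneg_left hle (Complex.normSq_nonneg y)
    _ = Complex.normSq x * I.norm := heq.symm

lemma image_mul_genSet (x p q : ℂ) :
    (fun t => x * t) '' genSet Δ p q = genSet Δ (x * p) (x * q) := by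
  ext u
  constructor
  · rintro ⟨_, ⟨s, hs, t, ht, rfl⟩, rfl⟩
    exact ⟨s, hs, t, ht, by ring⟩
  · rintro ⟨s, hs, t, ht, rfl⟩
    exact ⟨p * s + q * t, ⟨s, hs, t, ht, rfl⟩, by ring⟩

end ReducedIdeals

lemma norm_le_mu {B : Set ℂ} (hB : B.Finite) {b : ℂ} (hb : b ∈ B) : ‖b‖ ≤ mu B :=
  le_csSup (hB.image _).bddAbove ⟨b, hb, rfl⟩

lemma mu_pos {B : Set ℂ} (hne : B.Nonempty) (hB : B.Finite) (h0 : (0 : ℂ) ∉ B) : 0 < mu B := by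
  obtain ⟨b, hb⟩ := hne
  exact (norm_pos_iff.mpr (ne_of_mem_of_not_mem hb h0)).trans_le (norm_le_mu hB hb)

lemma natCast_le_of_succ_le {m : ℕ} {N : ℕ∞} (h : ((m + 1 : ℕ) : ℕ∞) ≤ N) : (m : ℕ∞) ≤ N :=
  (ENat.natCast_le_natCast.2 m.le_succ).trans h

namespace Run

variable {Δ : ℤ} {B : Set ℂ} {ε : ℝ} {z : ℂ} {N : ℕ∞} (R : Run Δ B ε z N)

lemma zs_succ {m : ℕ} (hm : ((m + 1 : ℕ) : ℕ∞) ≤ N) :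
    R.zs (m + 1) = R.b m / (R.b (m + 1) * R.zs m - R.a (m + 1)) := by
  simpa using R.hz (m + 1) (by omega) hm

lemma sub_ne_zero_succ {m : ℕ} (hm : ((m + 1 : ℕ) : ℕ∞) ≤ N) :
    R.b (m + 1) * R.zs m - R.a (m + 1) ≠ 0 := by
  simpa using R.hne (m + 1) (by omega) hm

lemma norm_sub_le_succ {m : ℕ} (hm : ((m + 1 : ℕ) : ℕ∞) ≤ N) :
    ‖R.b (m + 1) * R.zs m - R.a (m + 1)‖ ≤ ε * ‖R.b m‖ := by
  simpa using R.hclose (m + 1) (by omega) hm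

lemma b_ne_zero_of_succ {m : ℕ} (hm : ((m + 1 : ℕ) : ℕ∞) ≤ N) : R.b m ≠ 0 := by
  intro h0
  have := R.norm_sub_le_succ hm
  rw [h0, norm_zero, mul_zero, norm_le_zero_iff] at this
  exact R.sub_ne_zero_succ hm this

lemma one_le_eps_mul_norm_zs_succ {m : ℕ} (hm : ((m + 1 : ℕ) : ℕ∞) ≤ N) :
    1 ≤ ε * ‖R.zs (m + 1)‖ := by
  have hw := norm_pos_iff.mpr (R.sub_ne_zero_succ hm)
  rw [R.zs_succ hm, norm_div, mul_div_assoc', le_div_iff₀ hw, one_mul]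
  exact R.norm_sub_le_succ hm

lemma one_lt_norm_zs_succ (hε1 : ε < 1) {m : ℕ} (hm : ((m + 1 : ℕ) : ℕ∞) ≤ N) :
    1 < ‖R.zs (m + 1)‖ := by
  have h := R.one_le_eps_mul_norm_zs_succ hm
  have hz : 0 < ‖R.zs (m + 1)‖ := norm_pos_iff.mpr fun h0 => by norm_num [h0] at h
  calc 1 ≤ ε * ‖R.zs (m + 1)‖ := h
    _ < 1 * ‖R.zs (m + 1)‖ := mul_lt_mul_of_pos_right hε1 hz
    _ = ‖R.zs (m + 1)‖ := one_mul _

def zprod (n : ℕ) : ℂ := ∏ k ∈ Finset.range n, R.zs (k + 1)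

lemma zprod_succ (m : ℕ) : R.zprod (m + 1) = R.zprod m * R.zs (m + 1) :=
  Finset.prod_range_succ _ _

lemma one_le_norm_zprod (hε1 : ε < 1) : ∀ {n : ℕ}, (n : ℕ∞) ≤ N → 1 ≤ ‖R.zprod n‖
  | 0, _ => by simp [zprod]
  | m + 1, hm => by
    rw [zprod_succ, norm_mul]
    exact one_le_mul_of_one_le_of_one_le (one_le_norm_zprod hε1 (natCast_le_of_succ_le hm))
      (R.one_lt_norm_zs_succ hε1 hm).le

def SatisfiesRecurrence (x : ℤ → ℂ) : Prop :=
  ∀ m : ℕ, ((m + 1 : ℕ) : ℕ∞) ≤ N →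
    x (m + 1) = (R.a (m + 1) * x m + R.b (m + 1) * x (m - 1)) / R.b m

lemma satisfiesRecurrence_p : R.SatisfiesRecurrence R.p := fun m hm => by
  simpa [show (m : ℤ) + 1 - 2 = m - 1 by ring] using R.hp (m + 1) (by omega) hm

lemma satisfiesRecurrence_q : R.SatisfiesRecurrence R.q := fun m hm => by
  simpa [show (m : ℤ) + 1 - 2 = m - 1 by ring] using R.hq (m + 1) (by omega) hm

lemma satisfiesRecurrence_q_mul_sub_p : R.SatisfiesRecurrence (fun k => R.q k * z - R.p k) :=
  fun m hm => by
    dsimp only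
    rw [R.satisfiesRecurrence_q m hm, R.satisfiesRecurrence_p m hm]
    ring

variable {R} in
/-- Since `aₙ₊₁ = bₙ₊₁ zₙ - bₙ / zₙ₊₁`, the quantity `xₙ zₙ + xₙ₋₁` gets multiplied by
`bₙ₊₁ zₙ₊₁ / bₙ` at each step. -/
lemma SatisfiesRecurrence.mul_zs_add {x : ℤ → ℂ} (hx : R.SatisfiesRecurrence x) :
    ∀ {n : ℕ}, (n : ℕ∞) ≤ N →
      x n * R.zs n + x (n - 1) = R.b n * R.zprod n * (x 0 * z + x (-1))
  | 0, _ => by simp [zprod, R.b_zero, R.zs_zero]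
  | m + 1, hm => by
    have ih := hx.mul_zs_add (natCast_le_of_succ_le hm)
    have hb := R.b_ne_zero_of_succ hm
    have hw := R.sub_ne_zero_succ hm
    push_cast
    rw [add_sub_cancel_right, hx m hm, R.zprod_succ, R.zs_succ hm]
    field_simp
    linear_combination R.b (m + 1) * ih

lemma q_mul_zs_add {n : ℕ} (hn : (n : ℕ∞) ≤ N) :
    R.q n * R.zs n + R.q (n - 1) = R.b n * R.zprod n := by
  simpa [R.q_zero, R.q_neg_one] using R.satisfiesRecurrence_q.mul_zs_add hn

lemma q_mul_sub_p_mul_zprod : ∀ {n : ℕ}, (n : ℕ∞) ≤ N →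
    (R.q n * z - R.p n) * R.zprod n = (-1) ^ (n + 1)
  | 0, _ => by simp [zprod, R.q_zero, R.p_zero]
  | m + 1, hm => by
    have ih := q_mul_sub_p_mul_zprod (natCast_le_of_succ_le hm)
    have h := R.satisfiesRecurrence_q_mul_sub_p.mul_zs_add hm
    simp only [R.q_zero, R.p_zero, R.q_neg_one, R.p_neg_one, Nat.cast_add, Nat.cast_one,
      add_sub_cancel_right] at h
    rw [Nat.cast_succ, R.zprod_succ, pow_succ]
    linear_combination R.zprod m * h - ih

/-- From `qₘ₊₁ zₘ₊₁ = bₘ₊₁ zₘ₊₁ (z₁ ⋯ zₘ) - qₘ` and `1 ≤ ε |zₘ₊₁|`; the constant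
`K = μ / (1 - ε²)` is the fixed point of `K ↦ μ + ε² K`. -/
lemma norm_q_succ_lt_of_lt (hB : B.Finite) (hε0 : 0 < ε) (hε1 : ε < 1) {m : ℕ}
    (hm : ((m + 1 : ℕ) : ℕ∞) ≤ N) (h : ‖R.q m‖ < mu B / (1 - ε ^ 2) * ε * ‖R.zprod m‖) :
    ‖R.q (m + 1)‖ < mu B / (1 - ε ^ 2) * ‖R.zprod m‖ := by
  set K := mu B / (1 - ε ^ 2)
  have hK : mu B + K * ε ^ 2 = K := by
    have : 1 - ε ^ 2 ≠ 0 := by nlinarith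
    simp only [K]
    field_simp
    ring
  have hz := R.one_le_eps_mul_norm_zs_succ hm
  have hzpos : 0 < ‖R.zs (m + 1)‖ := zero_lt_one.trans (R.one_lt_norm_zs_succ hε1 hm)
  have hrec := R.q_mul_zs_add hm
  push_cast at hrec
  rw [add_sub_cancel_right, zprod_succ] at hrec
  have htri : ‖R.q (m + 1)‖ * ‖R.zs (m + 1)‖ ≤
      ‖R.b (m + 1)‖ * ‖R.zprod m‖ * ‖R.zs (m + 1)‖ + ‖R.q m‖ := by
    have hsub : R.q (m + 1) * R.zs (m + 1) = R.b (m + 1) * R.zprod m * R.zs (m + 1) - R.q m := by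
      linear_combination hrec
    rw [← norm_mul, ← norm_mul, ← norm_mul, hsub]
    exact norm_sub_le _ _
  have hb : ‖R.b (m + 1)‖ ≤ mu B := by simpa using norm_le_mu hB (R.hb (m + 1) (by omega) hm)
  refine lt_of_mul_lt_mul_right ?_ hzpos.le
  calc ‖R.q (m + 1)‖ * ‖R.zs (m + 1)‖
      ≤ ‖R.b (m + 1)‖ * ‖R.zprod m‖ * ‖R.zs (m + 1)‖ + ‖R.q m‖ := htri
    _ < mu B * ‖R.zprod m‖ * ‖R.zs (m + 1)‖ + K * ε * ‖R.zprod m‖ * (ε * ‖R.zs (m + 1)‖) := by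
        refine add_lt_add_of_le_of_lt (by gcongr) ?_
        exact h.trans_le (le_mul_of_one_le_right ((norm_nonneg _).trans h.le) hz)
    _ = K * ‖R.zprod m‖ * ‖R.zs (m + 1)‖ := by linear_combination ‖R.zprod m‖ * ‖R.zs (m + 1)‖ * hK

lemma norm_q_lt (hB : B.Finite) (hμ : 0 < mu B) (hε0 : 0 < ε) (hε1 : ε < 1) :
    ∀ {n : ℕ}, (n : ℕ∞) ≤ N → ‖R.q n‖ < mu B / (1 - ε ^ 2) * ε * ‖R.zprod n‖
  | 0, _ => by
    have : 0 < 1 - ε ^ 2 := by nlinarith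
    simpa [R.q_zero, zprod] using by positivity
  | m + 1, hm => by
    have ih := norm_q_lt hB hμ hε0 hε1 (natCast_le_of_succ_le hm)
    have hstep := R.norm_q_succ_lt_of_lt hB hε0 hε1 hm ih
    rw [R.zprod_succ, norm_mul, Nat.cast_succ]
    calc ‖R.q (m + 1)‖ < mu B / (1 - ε ^ 2) * ‖R.zprod m‖ := hstep
      _ ≤ mu B / (1 - ε ^ 2) * ‖R.zprod m‖ * (ε * ‖R.zs (m + 1)‖) :=
        le_mul_of_one_le_right ((norm_nonneg _).trans hstep.le) (R.one_le_eps_mul_norm_zs_succ hm)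
      _ = _ := by ring

lemma norm_q_succ_lt (hB : B.Finite) (hμ : 0 < mu B) (hε0 : 0 < ε) (hε1 : ε < 1) {m : ℕ}
    (hm : ((m + 1 : ℕ) : ℕ∞) ≤ N) :
    ‖R.q (m + 1)‖ < mu B / (1 - ε ^ 2) * ‖R.zprod m‖ :=
  R.norm_q_succ_lt_of_lt hB hε0 hε1 hm
    (R.norm_q_lt hB hμ hε0 hε1 (natCast_le_of_succ_le hm))

/-- If `qₘ₊₁ = 0` then `|pₘ₊₁| |z₁ ⋯ zₘ₊₁| = 1`, impossible for `0 ≠ pₘ₊₁ ∈ 𝒪` since `|zₖ| > 1`. -/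
lemma q_succ_ne_zero (hΔneg : Δ < 0) (hΔmod : Δ % 4 = 0 ∨ Δ % 4 = 1) (hε1 : ε < 1) {m : ℕ}
    (hm : ((m + 1 : ℕ) : ℕ∞) ≤ N) : R.q (m + 1) ≠ 0 := by
  intro hq
  have h := R.q_mul_sub_p_mul_zprod hm
  have hpO := R.hpO (m + 1) (by omega) hm
  push_cast at h hpO
  rw [hq, zero_mul, zero_sub, R.zprod_succ] at h
  have hp0 : R.p (m + 1) ≠ 0 := fun hp => by
    rw [hp, neg_zero, zero_mul] at h
    exact pow_ne_zero _ (neg_ne_zero.mpr one_ne_zero) h.symm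
  have hnorm := congrArg norm h
  rw [norm_mul, norm_mul, norm_neg, norm_pow, norm_neg, norm_one, one_pow] at hnorm
  have hZ := R.one_le_norm_zprod hε1 (natCast_le_of_succ_le hm)
  have hzs := R.one_lt_norm_zs_succ hε1 hm
  have hp := one_le_norm_of_mem_O hΔneg hΔmod hpO hp0
  nlinarith [mul_le_mul hp hZ zero_le_one (norm_nonneg _)]

lemma norm_a_succ_succ_le (hB : B.Finite) (hε0 : 0 < ε) {m : ℕ} (hm : ((m + 1 + 1 : ℕ) : ℕ∞) ≤ N) :
    ‖R.a (m + 1 + 1)‖ ≤ (1 + ε ^ 2) * mu B * ‖R.zs (m + 1)‖ := by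
  have hm1 : ((m + 1 : ℕ) : ℕ∞) ≤ N := natCast_le_of_succ_le hm
  have hclose := R.norm_sub_le_succ hm
  have hb : ‖R.b (m + 1 + 1)‖ ≤ mu B := by
    simpa using norm_le_mu hB (R.hb (m + 1 + 1) (by omega) hm)
  have hb' : ‖R.b (m + 1)‖ ≤ mu B := by simpa using norm_le_mu hB (R.hb (m + 1) (by omega) hm1)
  have hz := R.one_le_eps_mul_norm_zs_succ hm1
  push_cast at hclose
  calc ‖R.a (m + 1 + 1)‖
      ≤ ‖R.b (m + 1 + 1)‖ * ‖R.zs (m + 1)‖ +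
          ‖R.b (m + 1 + 1) * R.zs (m + 1) - R.a (m + 1 + 1)‖ := by
        rw [← norm_mul]
        simpa using norm_sub_le (R.b (m + 1 + 1) * R.zs (m + 1))
          (R.b (m + 1 + 1) * R.zs (m + 1) - R.a (m + 1 + 1))
    _ ≤ mu B * ‖R.zs (m + 1)‖ + ε * mu B * (ε * ‖R.zs (m + 1)‖) := by
        gcongr
        calc _ ≤ ε * ‖R.b (m + 1)‖ := hclose
          _ ≤ ε * mu B := mul_le_mul_of_nonneg_left hb' hε0.le
          _ ≤ ε * mu B * (ε * ‖R.zs (m + 1)‖) :=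
            le_mul_of_one_le_right (mul_nonneg hε0.le ((norm_nonneg _).trans hb')) hz
    _ = (1 + ε ^ 2) * mu B * ‖R.zs (m + 1)‖ := by ring

lemma norm_b_succ_succ_lt_of_a_eq_zero (hε0 : 0 < ε) (hε1 : ε < 1) {m : ℕ}
    (hm : ((m + 1 + 1 : ℕ) : ℕ∞) ≤ N) (ha : R.a (m + 1 + 1) = 0) :
    ‖R.b (m + 1 + 1)‖ < ‖R.b (m + 1)‖ := by
  have hm1 : ((m + 1 : ℕ) : ℕ∞) ≤ N := natCast_le_of_succ_le hm
  have hclose := R.norm_sub_le_succ hm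
  push_cast at hclose
  rw [ha, sub_zero, norm_mul] at hclose
  have hz := R.one_le_eps_mul_norm_zs_succ hm1
  have hb : 0 < ‖R.b (m + 1)‖ := by simpa using norm_pos_iff.mpr (R.b_ne_zero_of_succ hm)
  calc ‖R.b (m + 1 + 1)‖ ≤ ‖R.b (m + 1 + 1)‖ * (ε * ‖R.zs (m + 1)‖) :=
        le_mul_of_one_le_right (norm_nonneg _) hz
    _ = ε * (‖R.b (m + 1 + 1)‖ * ‖R.zs (m + 1)‖) := by ring
    _ ≤ ε * (ε * ‖R.b (m + 1)‖) := mul_le_mul_of_nonneg_left hclose hε0.le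
    _ < ‖R.b (m + 1)‖ := by
        nlinarith [mul_lt_mul_of_pos_right hε1 (mul_pos hε0 hb), mul_lt_mul_of_pos_right hε1 hb]

/-- If `aₘ₊₂ = 0` then `(pₘ₊₂, qₘ₊₂) = (bₘ₊₂ / bₘ₊₁) (pₘ, qₘ)`, so the reduced ideal
`(pₘ, qₘ)` would be shrunk by the factor `|bₘ₊₂ / bₘ₊₁| < 1`. -/
lemma a_succ_succ_ne_zero (hΔneg : Δ < 0) (hΔmod : Δ % 4 = 0 ∨ Δ % 4 = 1)
    (hadm : Admissible Δ B ε) (hε0 : 0 < ε) (hε1 : ε < 1) {m : ℕ}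
    (hm : ((m + 1 + 1 : ℕ) : ℕ∞) ≤ N) : R.a (m + 1 + 1) ≠ 0 := by
  intro ha
  have hm1 : ((m + 1 : ℕ) : ℕ∞) ≤ N := natCast_le_of_succ_le hm
  have hshift : ∀ x, R.SatisfiesRecurrence x →
      x (m + 1 + 1) = R.b (m + 1 + 1) / R.b (m + 1) * x m := by
    intro x hx
    have h := hx (m + 1) hm
    push_cast at h
    rw [h, ha, add_sub_cancel_right]
    ring
  have hlt := R.norm_b_succ_succ_lt_of_a_eq_zero hε0 hε1 hm ha
  rcases m with _ | k
  · have hq := hshift R.q R.satisfiesRecurrence_q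
    simp only [Nat.cast_zero, zero_add, R.q_zero, mul_zero] at hq
    exact R.q_succ_ne_zero hΔneg hΔmod hε1 hm (by simpa using hq)
  · obtain ⟨J, hJ, hJc⟩ := R.hred (k + 1) (by omega)
      ((ENat.natCast_le_natCast.2 (by omega)).trans hm)
    obtain ⟨J', hJ', hJ'c⟩ := R.hred (k + 1 + 1 + 1) (by omega) hm
    have hb₁ : R.b ((k + 1 + 1 : ℕ) : ℤ) ≠ 0 := fun h =>
      hadm.2.2.2.1 (h ▸ R.hb (k + 1 + 1) (by omega) hm1)
    have hb₂ : R.b ((k + 1 + 1 + 1 : ℕ) : ℤ) ≠ 0 := fun h =>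
      hadm.2.2.2.1 (h ▸ R.hb (k + 1 + 1 + 1) (by omega) hm)
    have hbO₁ := hadm.2.2.1 (R.hb (k + 1 + 1) (by omega) hm1)
    have hbO₂ := hadm.2.2.1 (R.hb (k + 1 + 1 + 1) (by omega) hm)
    push_cast at hJc hJ'c hb₁ hb₂ hbO₁ hbO₂ hlt hshift
    have himage : (fun t => R.b (k + 1 + 1 + 1) * t) '' J.carrier =
        (fun t => R.b (k + 1 + 1) * t) '' J'.carrier := by
      rw [hJc, hJ'c, image_mul_genSet, image_mul_genSet, hshift R.p R.satisfiesRecurrence_p,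
        hshift R.q R.satisfiesRecurrence_q]
      congr 1 <;> field_simp
    have hle := hJ.normSq_le_of_image_eq hΔneg hΔmod hJ'.1 hbO₂ hbO₁ hb₂ hb₁ himage
    rw [Complex.normSq_eq_norm_sq, Complex.normSq_eq_norm_sq] at hle
    exact hle.not_gt (pow_lt_pow_left₀ hlt (norm_nonneg _) two_ne_zero)

lemma norm_q_mul_sub_mul_norm_zprod {n : ℕ} (hn : (n : ℕ∞) ≤ N) :
    ‖R.q n * (R.q n * z - R.p n)‖ * ‖R.zprod n‖ = ‖R.q n‖ := by
  rw [norm_mul, mul_assoc, ← norm_mul, R.q_mul_sub_p_mul_zprod hn, norm_pow, norm_neg, norm_one,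
    one_pow, mul_one]

lemma norm_q_mul_sub_lt_div_norm_zs (hadm : Admissible Δ B ε) (hε0 : 0 < ε) (hε1 : ε < 1)
    {m : ℕ} (hm : ((m + 1 : ℕ) : ℕ∞) ≤ N) :
    ‖R.q (m + 1) * (R.q (m + 1) * z - R.p (m + 1))‖ <
      mu B / ((1 - ε ^ 2) * ‖R.zs (m + 1)‖) := by
  have hμ := mu_pos hadm.1 hadm.2.1 hadm.2.2.2.1
  have h1e : 0 < 1 - ε ^ 2 := by nlinarith
  have hZ := zero_lt_one.trans_le (R.one_le_norm_zprod hε1 (natCast_le_of_succ_le hm))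
  have hzs := zero_lt_one.trans (R.one_lt_norm_zs_succ hε1 hm)
  have hLZ := R.norm_q_mul_sub_mul_norm_zprod hm
  rw [Nat.cast_succ, R.zprod_succ, norm_mul (R.zprod m)] at hLZ
  have h : ‖R.q (m + 1) * (R.q (m + 1) * z - R.p (m + 1))‖ * ‖R.zs (m + 1)‖ <
      mu B / (1 - ε ^ 2) := by
    refine lt_of_mul_lt_mul_right ?_ hZ.le
    calc _ = ‖R.q (m + 1)‖ := by rw [← hLZ]; ring
      _ < mu B / (1 - ε ^ 2) * ‖R.zprod m‖ := R.norm_q_succ_lt hadm.2.1 hμ hε0 hε1 hm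
  rw [lt_div_iff₀ h1e] at h
  rw [lt_div_iff₀ (by positivity)]
  linarith

lemma norm_q_mul_sub_lt_div_norm_a (hΔneg : Δ < 0) (hΔmod : Δ % 4 = 0 ∨ Δ % 4 = 1)
    (hadm : Admissible Δ B ε) (hε0 : 0 < ε) (hε1 : ε < 1) {m : ℕ}
    (hm : ((m + 1 + 1 : ℕ) : ℕ∞) ≤ N) :
    ‖R.q (m + 1) * (R.q (m + 1) * z - R.p (m + 1))‖ <
      (1 + ε ^ 2) * mu B ^ 2 / ((1 - ε ^ 2) * ‖R.a (m + 1 + 1)‖) := by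
  have hμ := mu_pos hadm.1 hadm.2.1 hadm.2.2.2.1
  have h1e : 0 < 1 - ε ^ 2 := by nlinarith
  have hzs := zero_lt_one.trans (R.one_lt_norm_zs_succ hε1 (natCast_le_of_succ_le hm))
  have ha := norm_pos_iff.mpr (R.a_succ_succ_ne_zero hΔneg hΔmod hadm hε0 hε1 hm)
  refine (R.norm_q_mul_sub_lt_div_norm_zs hadm hε0 hε1 (natCast_le_of_succ_le hm)).trans_le ?_
  rw [div_le_div_iff₀ (by positivity) (mul_pos h1e ha)]
  calc mu B * ((1 - ε ^ 2) * ‖R.a (m + 1 + 1)‖)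
      = mu B * (1 - ε ^ 2) * ‖R.a (m + 1 + 1)‖ := by ring
    _ ≤ mu B * (1 - ε ^ 2) * ((1 + ε ^ 2) * mu B * ‖R.zs (m + 1)‖) := by
      gcongr
      exact R.norm_a_succ_succ_le hadm.2.1 hε0 hm
    _ = (1 + ε ^ 2) * mu B ^ 2 * ((1 - ε ^ 2) * ‖R.zs (m + 1)‖) := by ring

lemma norm_q_mul_sub_lt_div_norm_q (hΔneg : Δ < 0) (hΔmod : Δ % 4 = 0 ∨ Δ % 4 = 1)
    (hadm : Admissible Δ B ε) (hε0 : 0 < ε) (hε1 : ε < 1) {m : ℕ}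
    (hm : ((m + 1 + 1 : ℕ) : ℕ∞) ≤ N) :
    ‖R.q (m + 1) * (R.q (m + 1) * z - R.p (m + 1))‖ <
      mu B * ‖R.q (m + 1)‖ / ((1 - ε ^ 2) * ‖R.q (m + 1 + 1)‖) := by
  have hμ := mu_pos hadm.1 hadm.2.1 hadm.2.2.2.1
  have h1e : 0 < 1 - ε ^ 2 := by nlinarith
  have hm1 := natCast_le_of_succ_le hm
  have hq₁ := norm_pos_iff.mpr (R.q_succ_ne_zero hΔneg hΔmod hε1 hm1)
  have hq₂ := norm_pos_iff.mpr (R.q_succ_ne_zero hΔneg hΔmod hε1 hm)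
  have hq := R.norm_q_succ_lt hadm.2.1 hμ hε0 hε1 hm
  have hLZ := R.norm_q_mul_sub_mul_norm_zprod hm1
  simp only [Nat.cast_add, Nat.cast_one] at hq₂ hq hLZ
  set L := ‖R.q (m + 1) * (R.q (m + 1) * z - R.p (m + 1))‖
  have hL : 0 < L := pos_of_mul_pos_left (hLZ ▸ hq₁) (norm_nonneg _)
  rw [lt_div_iff₀ (by positivity)]
  calc L * ((1 - ε ^ 2) * ‖R.q (m + 1 + 1)‖)
      = L * (1 - ε ^ 2) * ‖R.q (m + 1 + 1)‖ := by ring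
    _ < L * (1 - ε ^ 2) * (mu B / (1 - ε ^ 2) * ‖R.zprod (m + 1)‖) := by gcongr
    _ = mu B * (L * ‖R.zprod (m + 1)‖) := by field_simp
    _ = mu B * ‖R.q (m + 1)‖ := by rw [hLZ]

end Run

theorem stmt5 (Δ : ℤ) (hΔneg : Δ < 0) (hΔmod : Δ % 4 = 0 ∨ Δ % 4 = 1)
    (B : Set ℂ) (ε : ℝ) (hε0 : 0 < ε) (hε1 : ε < 1) (hadm : Admissible Δ B ε)
    (z : ℂ) (N : ℕ∞) (R : Run Δ B ε z N)
    (n : ℕ) (hn : 1 ≤ n) (hnN : (n : ℕ∞) ≤ N) :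
    ‖R.q n * (R.q n * z - R.p n)‖ <
      mu B / ((1 - ε ^ 2) * ‖R.zs n‖) ∧
    (((n + 1 : ℕ) : ℕ∞) ≤ N →
      ‖R.q n * (R.q n * z - R.p n)‖ <
        (1 + ε ^ 2) * mu B ^ 2 / ((1 - ε ^ 2) * ‖R.a ((n : ℤ) + 1)‖) ∧
      ‖R.q n * (R.q n * z - R.p n)‖ <
        mu B * ‖R.q n‖ / ((1 - ε ^ 2) * ‖R.q ((n : ℤ) + 1)‖)) := by
  obtain ⟨m, rfl⟩ : ∃ m, n = m + 1 := ⟨n - 1, by omega⟩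
  push_cast
  exact ⟨R.norm_q_mul_sub_lt_div_norm_zs hadm hε0 hε1 hnN, fun hN =>
    ⟨R.norm_q_mul_sub_lt_div_norm_a hΔneg hΔmod hadm hε0 hε1 hN,
      R.norm_q_mul_sub_lt_div_norm_q hΔneg hΔmod hadm hε0 hε1 hN⟩⟩

end CFNE
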